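/- arXiv:1908.11041 — 3 statements merged into one kernel-verified Lean document; each statement's English description precedes it below -/
import Mathlib

section
/- Let n be a positive integer, μ a partition with μ'_1 + μ'_2 ≤ n, λ a partition with at most n parts, and δ an even partition (all parts even) with at most n parts. Suppose ℓ(λ) ≤ n/2. Then every Littlewood-Richardson tableau of shape λ/δ with content μ^π (anti-lattice word condition) automatically satisfies the flag condition: if U is the companion tableau of shape μ^π, with entries τ_1 > ⋯ > τ_q in its second rightmost column (q = μ'_2), and n_j = 2j for 1 ≤ j ≤ q, then τ_j + n_j ≤ n + 1 for all j. -/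
/-! Column insertion only permutes letters, so every entry of `U` is an entry of `H_λ`, hence at
most `ℓ(λ)`. The entries `τ_q < ⋯ < τ_1` of a column of `U` are positive integers, so
`τ_j + (j - 1) ≤ τ_1 ≤ ℓ(λ)`, and in particular `j ≤ ℓ(λ)`. Adding the two,
`τ_j + 2j ≤ 2ℓ(λ) + 1 ≤ n + 1`. -/

namespace LRPaper

/-- A partition, encoded as a weakly decreasing list of positive integers. -/
def IsPartition (l : List ℕ) : Prop := l.Pairwise (· ≥ ·) ∧ ∀ x ∈ l, 0 < x

/-- The conjugate (transposed) partition, as a list. -/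
def conj (l : List ℕ) : List ℕ :=
  (List.range l.headI).map fun i => l.countP fun x => decide (i < x)

/-- The entry of a skew tableau `T` (list of rows, row `i` having the cells
`mu_i ≤ j < lam_i`) in row `i` and (absolute) column `j`. -/
def entry (mu : List ℕ) (T : List (List ℕ)) (i j : ℕ) : ℕ :=
  (T.getD i []).getD (j - mu.getD i 0) 0

/-- `T` is a semistandard tableau of skew shape `lam/mu` (entries are positive
integers, rows weakly increase, columns strictly increase). -/
def IsSkewSSYT (lam mu : List ℕ) (T : List (List ℕ)) : Prop :=
  T.length = lam.length ∧
  (∀ i, (T.getD i []).length = lam.getD i 0 - mu.getD i 0) ∧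
  (∀ r ∈ T, ∀ x ∈ r, 0 < x) ∧
  (∀ r ∈ T, r.Pairwise (· ≤ ·)) ∧
  (∀ i j, mu.getD i 0 ≤ j → mu.getD (i+1) 0 ≤ j → j < lam.getD (i+1) 0 →
    entry mu T i j < entry mu T (i+1) j)

/-- The number of occurrences of `k` among the entries of `T`. -/
def content (T : List (List ℕ)) (k : ℕ) : ℕ := T.flatten.count k

/-- `T` has content `nu` : the letter `k+1` occurs `nu_{k+1}` times. -/
def HasContent (nu : List ℕ) (T : List (List ℕ)) : Prop :=
  ∀ k, content T (k+1) = nu.getD k 0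

/-- The reverse reading word: each row right-to-left, rows top-to-bottom. -/
def rwordRev (T : List (List ℕ)) : List ℕ := (T.map List.reverse).flatten

/-- The column reading word `w(T)` : columns right-to-left, and from top to
bottom within each column. -/
def colWord (lam mu : List ℕ) (T : List (List ℕ)) : List ℕ :=
  ((List.range lam.headI).reverse.map fun c =>
    (List.range T.length).filterMap fun i =>
      if mu.getD i 0 ≤ c ∧ c < lam.getD i 0 then some (entry mu T i c) else none).flatten

/-- A lattice word: in every prefix, `i` occurs at least as often as `i+1`. -/
def IsLattice (w : List ℕ) : Prop :=
  ∀ k i, (w.take k).count (i+2) ≤ (w.take k).count (i+1)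

/-- An anti-lattice word (for letters bounded by `ℓ`): in every suffix, `i`
occurs at least as often as `i-1`, for `1 < i ≤ ℓ`. -/
def IsAntiLattice (w : List ℕ) (ℓ : ℕ) : Prop :=
  ∀ k i, i + 2 ≤ ℓ → (w.drop k).count (i+1) ≤ (w.drop k).count (i+2)

/-- A Littlewood–Richardson tableau of shape `lam/mu` and content `nu`. -/
def IsLR (lam mu nu : List ℕ) (T : List (List ℕ)) : Prop :=
  IsSkewSSYT lam mu T ∧ HasContent nu T ∧ IsLattice (rwordRev T)

/-- A Littlewood–Richardson tableau of shape `lam/mu` with content `nu^π`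
(the 180° rotation of `nu`): the column reading word is an anti-lattice word
and the letter `i` occurs `nu_{ℓ(nu)+1-i}` times. -/
def IsAntiLR (lam mu nu : List ℕ) (T : List (List ℕ)) : Prop :=
  IsSkewSSYT lam mu T ∧ HasContent nu.reverse T ∧
    IsAntiLattice (colWord lam mu T) nu.length

/-- Column insertion of `x` into a single column (top-to-bottom list): `x`
replaces the topmost entry `≥ x` (which is bumped to the next column), or is
appended at the bottom. -/
def colInsertCol (x : ℕ) : List ℕ → List ℕ × Option ℕ
  | [] => ([x], none)
  | y :: ys =>
    if x ≤ y then (x :: ys, some y)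
    else
      let p := colInsertCol x ys
      (y :: p.1, p.2)

/-- Column insertion of a letter into a tableau presented as its list of
columns (left to right). -/
def colInsert (x : ℕ) : List (List ℕ) → List (List ℕ)
  | [] => [[x]]
  | C :: rest =>
    match colInsertCol x C with
    | (C', none) => C' :: rest
    | (C', some y) => C' :: colInsert y rest

/-- Column insertion of a word (left to right) into a tableau given by its
columns. -/
def insertWord (w : List ℕ) (C : List (List ℕ)) : List (List ℕ) :=
  w.foldl (fun acc x => colInsert x acc) C

/-- The columns of the superstandard tableau `H_mu` of shape `mu`: the `i`-th
entry from the top of each column is `i`. -/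
def Hcols (mu : List ℕ) : List (List ℕ) :=
  (List.range mu.headI).map fun c => (List.range ((conj mu).getD c 0)).map (· + 1)

/-- The outer shape of the rotated diagram `mu^π` (a rectangle of width `mu_1`). -/
def piOuter (mu : List ℕ) : List ℕ := List.replicate mu.length mu.headI

/-- The inner shape of the rotated diagram `mu^π`. -/
def piInner (mu : List ℕ) : List ℕ :=
  (List.range mu.length).map fun i => mu.headI - mu.getD (mu.length - 1 - i) 0

/-- `S` is (the companion tableau of) an LR tableau in `LR^{lam'}_{delta' mu'}`:
a semistandard tableau of straight shape `mu'` whose column insertion into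
`H_{delta'}` yields `H_{lam'}`. -/
def IsCompanion (lam delta mu : List ℕ) (S : List (List ℕ)) : Prop :=
  IsSkewSSYT (conj mu) [] S ∧
    insertWord (colWord (conj mu) [] S) (Hcols (conj delta)) = Hcols (conj lam)

/-- `U` is (the companion tableau of) an LR tableau in `LR^{lam}_{delta mu^π}`:
a semistandard tableau of shape `mu^π` whose column insertion into `H_delta`
yields `H_lam`. -/
def IsCompanionAnti (lam delta mu : List ℕ) (U : List (List ℕ)) : Prop :=
  IsSkewSSYT (piOuter mu) (piInner mu) U ∧
    insertWord (colWord (piOuter mu) (piInner mu) U) (Hcols delta) = Hcols lam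

/-- The `j`-th entry from the bottom of the second rightmost column of a
tableau `U` of shape `mu^π`. -/
def tauEnt (mu : List ℕ) (U : List (List ℕ)) (j : ℕ) : ℕ :=
  entry (piInner mu) U (mu.length - j) (mu.headI - 2)

open scoped List

theorem colInsertCol_perm (x : ℕ) (C : List ℕ) :
    (colInsertCol x C).1 ++ (colInsertCol x C).2.toList ~ x :: C := by
  induction C with
  | nil => simp [colInsertCol]
  | cons y ys ih =>
    simp only [colInsertCol]
    split
    · simp
    · exact (ih.cons y).trans (List.Perm.swap x y ys)

theorem colInsert_perm (x : ℕ) (Cs : List (List ℕ)) :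
    (colInsert x Cs).flatten ~ x :: Cs.flatten := by
  induction Cs generalizing x with
  | nil => simp [colInsert]
  | cons C rest ih =>
    have h := colInsertCol_perm x C
    simp only [colInsert]
    rcases hc : colInsertCol x C with ⟨C', _ | y⟩ <;> rw [hc] at h
    · simpa using h.append_right rest.flatten
    · simp only [List.flatten_cons]
      calc C' ++ (colInsert y rest).flatten ~ C' ++ y :: rest.flatten := (ih y).append_left C'
        _ = (C' ++ [y]) ++ rest.flatten := by simp
        _ ~ x :: (C ++ rest.flatten) := h.append_right _

theorem insertWord_perm (w : List ℕ) (Cs : List (List ℕ)) :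
    (insertWord w Cs).flatten ~ w ++ Cs.flatten := by
  induction w generalizing Cs with
  | nil => rfl
  | cons x w ih =>
    exact (ih (colInsert x Cs)).trans
      (((colInsert_perm x Cs).append_left w).trans List.perm_middle)

theorem getD_conj_le_length (l : List ℕ) (c : ℕ) : (conj l).getD c 0 ≤ l.length := by
  rcases lt_or_ge c l.headI with h | h
  · simp [conj, List.getD_eq_getElem?_getD, h, List.countP_le_length]
  · simp [conj, List.getD_eq_getElem?_getD, h]

theorem le_length_of_mem_Hcols {l : List ℕ} {v : ℕ} (hv : v ∈ (Hcols l).flatten) :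
    v ≤ l.length := by
  simp only [Hcols, List.mem_flatten, List.mem_map, List.mem_range] at hv
  obtain ⟨_, ⟨c, _, rfl⟩, hv⟩ := hv
  obtain ⟨k, hk, rfl⟩ := List.mem_map.mp hv
  exact (getD_conj_le_length l c).trans' (List.mem_range.mp hk)

theorem lt_getD_of_lt_countP {l : List ℕ} (hl : l.Pairwise (· ≥ ·)) {c k : ℕ}
    (hk : k < l.countP fun x => decide (c < x)) : c < l.getD k 0 := by
  induction l generalizing k with
  | nil => simp at hk
  | cons a t ih =>
    obtain ⟨ha, ht⟩ := List.pairwise_cons.mp hl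
    cases k with
    | zero =>
      obtain ⟨x, hx, hcx⟩ := List.countP_pos_iff.mp (Nat.zero_lt_of_lt hk)
      rcases List.mem_cons.mp hx with rfl | hx
      · simpa using hcx
      · simpa using (of_decide_eq_true hcx).trans_le (ha x hx)
    | succ k =>
      rw [List.countP_cons] at hk
      exact ih ht (by split at hk <;> omega)

theorem lt_getD_of_lt_getD_conj {l : List ℕ} (hl : l.Pairwise (· ≥ ·)) {c k : ℕ}
    (hk : k < (conj l).getD c 0) : c < l.getD k 0 := by
  rcases lt_or_ge c l.headI with h | h
  · simp only [conj, List.getD_eq_getElem?_getD, List.getElem?_map, List.getElem?_range h] at hk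
    exact lt_getD_of_lt_countP hl hk
  · simp [conj, List.getD_eq_getElem?_getD, h] at hk

def IsSkewCell (lam mu : List ℕ) (i c : ℕ) : Prop :=
  mu.getD i 0 ≤ c ∧ c < lam.getD i 0

section SkewTableau

variable {lam mu : List ℕ} {T : List (List ℕ)} {i c : ℕ}

theorem IsSkewSSYT.lt_length (hT : IsSkewSSYT lam mu T) (h : IsSkewCell lam mu i c) :
    i < T.length := by
  rw [hT.1]
  by_contra hi
  have := h.2
  rw [List.getD_eq_default _ _ (not_lt.mp hi)] at this
  omega

theorem IsSkewSSYT.entry_pos (hT : IsSkewSSYT lam mu T) (h : IsSkewCell lam mu i c) :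
    0 < entry mu T i c := by
  have hrow : T.getD i [] ∈ T := by
    rw [List.getD_eq_getElem _ _ (hT.lt_length h)]
    exact List.getElem_mem _
  have hc : c - mu.getD i 0 < (T.getD i []).length := by
    rw [hT.2.1 i]
    exact Nat.sub_lt_sub_right h.1 h.2
  rw [entry, List.getD_eq_getElem _ _ hc]
  exact hT.2.2.1 _ hrow _ (List.getElem_mem _)

theorem IsSkewSSYT.entry_add_le_entry (hT : IsSkewSSYT lam mu T) {m : ℕ}
    (h : ∀ k ≤ m, IsSkewCell lam mu (i + k) c) : entry mu T i c + m ≤ entry mu T (i + m) c := by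
  induction m with
  | zero => rfl
  | succ m ih =>
    have hstep := hT.2.2.2.2 (i + m) c (h m m.le_succ).1 (h (m + 1) le_rfl).1 (h (m + 1) le_rfl).2
    have := ih fun k hk => h k (hk.trans m.le_succ)
    rw [← add_assoc i m 1]
    omega

theorem entry_mem_colWord (hi : i < T.length) (hc : c < lam.headI) (h : IsSkewCell lam mu i c) :
    entry mu T i c ∈ colWord lam mu T := by
  simp only [colWord, List.mem_flatten, List.mem_map, List.mem_reverse, List.mem_range]
  refine ⟨_, ⟨c, hc, rfl⟩, List.mem_filterMap.mpr ⟨i, List.mem_range.mpr hi, ?_⟩⟩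
  exact if_pos h

end SkewTableau

theorem getD_piInner {mu : List ℕ} {i : ℕ} (hi : i < mu.length) :
    (piInner mu).getD i 0 = mu.headI - mu.getD (mu.length - 1 - i) 0 := by
  simp [piInner, List.getD_eq_getElem?_getD, hi]

theorem getD_piOuter {mu : List ℕ} {i : ℕ} (hi : i < mu.length) :
    (piOuter mu).getD i 0 = mu.headI := by
  simp [piOuter, List.getD_eq_getElem?_getD, hi]

theorem headI_piOuter {mu : List ℕ} (hmu : 0 < mu.length) : (piOuter mu).headI = mu.headI := by
  cases mu with
  | nil => simp at hmu
  | cons a t => simp [piOuter, List.replicate_succ]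

theorem isSkewCell_secondRightmostColumn {mu : List ℕ} (hmu : mu.Pairwise (· ≥ ·)) {j : ℕ}
    (hj : 1 ≤ j) (hjq : j ≤ (conj mu).getD 1 0) :
    IsSkewCell (piOuter mu) (piInner mu) (mu.length - j) (mu.headI - 2) := by
  have hjL : j ≤ mu.length := hjq.trans (getD_conj_le_length mu 1)
  have hrow : 1 < mu.getD (j - 1) 0 := lt_getD_of_lt_getD_conj hmu (by omega)
  have htop : 1 < mu.headI := by
    have := lt_getD_of_lt_getD_conj hmu (c := 1) (k := 0) (by omega)
    cases mu <;> simp_all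
  refine ⟨?_, ?_⟩
  · rw [getD_piInner (by omega), show mu.length - 1 - (mu.length - j) = j - 1 by omega]
    omega
  · rw [getD_piOuter (by omega)]
    omega

section CompanionTableau

variable {mu lam delta : List ℕ} {U : List (List ℕ)} {j : ℕ}

theorem tauEnt_pos (hmu : mu.Pairwise (· ≥ ·)) (hU : IsSkewSSYT (piOuter mu) (piInner mu) U)
    (hj : 1 ≤ j) (hjq : j ≤ (conj mu).getD 1 0) : 0 < tauEnt mu U j :=
  hU.entry_pos (isSkewCell_secondRightmostColumn hmu hj hjq)

theorem tauEnt_add_le_tauEnt_one (hmu : mu.Pairwise (· ≥ ·))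
    (hU : IsSkewSSYT (piOuter mu) (piInner mu) U) (hj : 1 ≤ j) (hjq : j ≤ (conj mu).getD 1 0) :
    tauEnt mu U j + (j - 1) ≤ tauEnt mu U 1 := by
  have hjL : j ≤ mu.length := hjq.trans (getD_conj_le_length mu 1)
  have h := hU.entry_add_le_entry (i := mu.length - j) (m := j - 1) (c := mu.headI - 2)
    fun k hk => by
      rw [show mu.length - j + k = mu.length - (j - k) by omega]
      exact isSkewCell_secondRightmostColumn hmu (by omega) (by omega)
  rwa [show mu.length - j + (j - 1) = mu.length - 1 by omega] at h

theorem IsCompanionAnti.le_length_of_mem_colWord (hU : IsCompanionAnti lam delta mu U) {v : ℕ}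
    (hv : v ∈ colWord (piOuter mu) (piInner mu) U) : v ≤ lam.length :=
  le_length_of_mem_Hcols <| hU.2 ▸ (insertWord_perm _ _).mem_iff.mpr (List.mem_append_left _ hv)

theorem tauEnt_one_le_length (hmu : mu.Pairwise (· ≥ ·)) (hU : IsCompanionAnti lam delta mu U)
    (hq : 1 ≤ (conj mu).getD 1 0) : tauEnt mu U 1 ≤ lam.length := by
  have hcell := isSkewCell_secondRightmostColumn hmu le_rfl hq
  have hL : 0 < mu.length := hq.trans (getD_conj_le_length mu 1)
  refine hU.le_length_of_mem_colWord (entry_mem_colWord (hU.1.lt_length hcell) ?_ hcell)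
  have := hcell.2
  rw [getD_piOuter (by omega)] at this
  rwa [headI_piOuter hL]

end CompanionTableau

theorem flag_condition_automatic_in_stable_range_general
    (n : ℕ) (mu lam delta : List ℕ)
    (hmu : IsPartition mu)
    (hstable : 2 * lam.length ≤ n)
    (U : List (List ℕ)) (hU : IsCompanionAnti lam delta mu U) :
    ∀ j, 1 ≤ j → j ≤ (conj mu).getD 1 0 → tauEnt mu U j + 2 * j ≤ n + 1 := by
  intro j hj hjq
  have hpos := tauEnt_pos hmu.1 hU.1 hj hjq
  have hchain := tauEnt_add_le_tauEnt_one hmu.1 hU.1 hj hjq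
  have htop := tauEnt_one_le_length hmu.1 hU (hj.trans hjq)
  omega

/-- In the stable range `ℓ(λ) ≤ n/2`, every
Littlewood–Richardson tableau of shape `λ/δ` with content `μ^π` (i.e. every
companion tableau `U` of shape `μ^π` with `(U → H_δ) = H_λ`) automatically
satisfies the flag condition: with `q = μ'_2`, `n_j = 2j`, the entries
`τ_1 > ⋯ > τ_q` of the second rightmost column of `U` (read from the bottom)
satisfy `τ_j + n_j ≤ n + 1` for all `1 ≤ j ≤ q`. -/
theorem flag_condition_automatic_in_stable_range
    (n : ℕ) (hn : 0 < n) (mu lam delta : List ℕ)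
    (hmu : IsPartition mu) (hmuO : (conj mu).headI + (conj mu).getD 1 0 ≤ n)
    (hlam : IsPartition lam) (hlamlen : lam.length ≤ n)
    (hstable : 2 * lam.length ≤ n)
    (hdelta : IsPartition delta) (hdeltalen : delta.length ≤ n)
    (hdeltaeven : ∀ x ∈ delta, 2 ∣ x)
    (U : List (List ℕ)) (hU : IsCompanionAnti lam delta mu U) :
    ∀ j, 1 ≤ j → j ≤ (conj mu).getD 1 0 → tauEnt mu U j + 2 * j ≤ n + 1 :=
  flag_condition_automatic_in_stable_range_general n mu lam delta hmu hstable U hU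

end LRPaper
end

section
/- Let U be a semistandard tableau of shape λ(a,b,c) = (2^{b+c},1^a)/(1^b) with entries in ℕ, consisting of left column U^L and right column U^R. Suppose r_U = 0 (the right column cannot be slid down while preserving semistandardness). If a > 0, then applying jeu de taquin to the position below the bottom of U^R yields a semistandard tableau of shape λ(a-1, b+1, c); if b > 0, applying jeu de taquin to the position above the top of U^L yields a semistandard tableau of shape λ(a+1, b-1, c). -/
/-!
A slide moves one entry `x` straight across from the left column into the right one, and the
two column words have the same column-insertion tableau. Insert the right column first and then
the left column entry by entry. Each entry above `x` bumps an entry of the right column no lower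
than its row neighbour, so the part `T` of the right column below the row of `x` is untouched,
whether or not `x` already sits above it. From then on both computations bump the entries of `T`
into the second column in the same order and end with the same first column.

It remains to choose `x` so that both fillings are semistandard. As `𝔯_U = 0`, sliding the right
column down by one breaks some row; for the slide into the cell below the right column take the
lowest such row, for the slide into the cell above the left column the highest one (if `b = 0`,
resp. `a = 0`, and no row breaks: the top, resp. bottom, row of the overlap).
-/

namespace LRPaper

/-- The `i`-th entry (1-based) of a column, counted from the bottom. -/
def ent (U : List ℕ) (i : ℕ) : ℕ := U.getD (U.length - i) 0

/-- A two-column filling of the skew shape `λ(a,b,c) = (2^{b+c},1^a)/(1^b)`: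
`L` is the left column (read top to bottom, of length `a+c`) and `R` is the
right column (of length `b+c`); the two columns overlap in `c` rows and the
bottom `a` entries of `L` form the tail. -/
structure TwoCol where
  a : ℕ
  b : ℕ
  c : ℕ
  L : List ℕ
  R : List ℕ

instance : Inhabited TwoCol := ⟨⟨0, 0, 0, [], []⟩⟩

/-- Sliding the right column down by `k` positions produces a filling of
`λ(a-k,b-k,c+k)`; `SlideOK T k` says that this filling has weakly increasing
rows (the columns being unchanged). -/
def SlideOK (T : TwoCol) (k : ℕ) : Prop :=
  ∀ i < T.c + k, T.L.getD i 0 ≤ T.R.getD (T.b - k + i) 0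

instance (T : TwoCol) : DecidablePred (SlideOK T) := by
  unfold SlideOK; infer_instance

/-- `T` is a semistandard filling of the two-column shape `λ(a,b,c)` with
entries in `ℕ_{>0}`. -/
def TC.Valid (T : TwoCol) : Prop :=
  T.L.length = T.a + T.c ∧ T.R.length = T.b + T.c ∧
  T.L.Chain' (· < ·) ∧ T.R.Chain' (· < ·) ∧
  (∀ x ∈ T.L, 0 < x) ∧ (∀ x ∈ T.R, 0 < x) ∧ SlideOK T 0

/-- `𝔯_T`: the maximal `k ≤ min{a,b}` such that sliding the right column down
by `k` positions yields a semistandard filling. -/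
def resid (T : TwoCol) : ℕ :=
  Nat.findGreatest (fun k => SlideOK T k) (min T.a T.b)

/-- The column reading word `w(T)` of a two-column tableau (right column
first, each read top to bottom). -/
def TC.word (T : TwoCol) : List ℕ := T.R ++ T.L

/-- Knuth equivalence of words, via equality of the column-insertion
tableaux. -/
def KnuthEq (v w : List ℕ) : Prop := insertWord v [] = insertWord w []

end LRPaper

namespace List

variable {α : Type*}

theorem insertIdx_eq_take_append_cons_drop (x : α) :
    ∀ {n : ℕ} {l : List α}, n ≤ l.length → l.insertIdx n x = l.take n ++ x :: l.drop n
  | 0, l, _ => by simp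
  | n + 1, [], h => by simp at h
  | n + 1, y :: l, h => by
    rw [insertIdx_succ_cons, insertIdx_eq_take_append_cons_drop x (Nat.le_of_succ_le_succ h)]
    simp

theorem drop_succ_insertIdx (x : α) {n : ℕ} {l : List α} (hn : n ≤ l.length) :
    (l.insertIdx n x).drop (n + 1) = l.drop n := by
  simp [insertIdx_eq_take_append_cons_drop x hn, drop_append, hn]

theorem getD_insertIdx_of_lt {l : List α} {x d : α} {n k : ℕ} (hk : k < n) :
    (l.insertIdx n x).getD k d = l.getD k d := by
  simp [getD_eq_getElem?_getD, getElem?_insertIdx_of_lt hk]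

theorem getD_insertIdx_self {l : List α} {x d : α} {n : ℕ} (hn : n ≤ l.length) :
    (l.insertIdx n x).getD n d = x := by
  simp [getD_eq_getElem?_getD, getElem?_insertIdx_self, hn]

theorem getD_insertIdx_of_gt {l : List α} {x d : α} {n k : ℕ} (hk : n < k) :
    (l.insertIdx n x).getD k d = l.getD (k - 1) d := by
  simp [getD_eq_getElem?_getD, getElem?_insertIdx_of_gt hk]

theorem getD_eraseIdx_of_lt {l : List α} {d : α} {n k : ℕ} (hk : k < n) :
    (l.eraseIdx n).getD k d = l.getD k d := by
  simp [getD_eq_getElem?_getD, getElem?_eraseIdx_of_lt hk]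

theorem getD_eraseIdx_of_ge {l : List α} {d : α} {n k : ℕ} (hk : n ≤ k) :
    (l.eraseIdx n).getD k d = l.getD (k + 1) d := by
  simp [getD_eq_getElem?_getD, getElem?_eraseIdx_of_ge hk]

theorem Pairwise.getD_lt_getD [Preorder α] {l : List α} (hl : l.Pairwise (· < ·)) {i k : ℕ}
    (hik : i < k) (hk : k < l.length) (d : α) : l.getD i d < l.getD k d := by
  rw [getD_eq_getElem _ _ (hik.trans hk), getD_eq_getElem _ _ hk]
  exact pairwise_iff_getElem.mp hl i k _ hk hik

theorem Pairwise.getD_le_getD [Preorder α] {l : List α} (hl : l.Pairwise (· < ·)) {i k : ℕ}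
    (hik : i ≤ k) (hk : k < l.length) (d : α) : l.getD i d ≤ l.getD k d := by
  rcases hik.lt_or_eq with hik | rfl
  · exact (hl.getD_lt_getD hik hk d).le
  · exact le_rfl

theorem Pairwise.insertIdx [Preorder α] {l : List α} (hl : l.Pairwise (· < ·)) {n : ℕ}
    {x d : α} (hn : n ≤ l.length) (hbelow : 0 < n → l.getD (n - 1) d < x)
    (habove : n < l.length → x < l.getD n d) : (l.insertIdx n x).Pairwise (· < ·) := by
  have htake : ∀ y ∈ l.take n, y < x := by
    intro y hy
    obtain ⟨i, hi, rfl⟩ := mem_iff_getElem.mp hy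
    have hin : i < n := by simp at hi; omega
    rw [getElem_take, ← getD_eq_getElem l d]
    exact (hl.getD_le_getD (by omega : i ≤ n - 1) (by omega) d).trans_lt (hbelow (by omega))
  have hdrop : ∀ y ∈ l.drop n, x < y := by
    intro y hy
    obtain ⟨i, hi, rfl⟩ := mem_iff_getElem.mp hy
    have hni : n + i < l.length := by simp at hi; omega
    rw [getElem_drop, ← getD_eq_getElem l d hni]
    exact (habove (by omega)).trans_le (hl.getD_le_getD (by omega) hni d)
  rw [insertIdx_eq_take_append_cons_drop x hn, pairwise_append, pairwise_cons]
  refine ⟨hl.sublist (take_sublist _ _), ⟨hdrop, hl.sublist (drop_sublist _ _)⟩, ?_⟩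
  rintro y hy z (_ | ⟨_, hz⟩)
  exacts [htake y hy, (htake y hy).trans (hdrop z hz)]

theorem forall₂_of_getD {β : Type*} {r : α → β → Prop} {l₁ : List α} {l₂ : List β} {d₁ : α}
    {d₂ : β} (hlen : l₁.length = l₂.length)
    (h : ∀ i < l₁.length, r (l₁.getD i d₁) (l₂.getD i d₂)) : Forall₂ r l₁ l₂ :=
  forall₂_of_length_eq_of_get hlen fun i h₁ h₂ => by
    simpa only [get_eq_getElem, getD_eq_getElem _ _ h₁, getD_eq_getElem _ _ h₂] using h i h₁

end List

namespace LRPaper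

theorem colInsertCol_of_forall_lt {x : ℕ} :
    ∀ {C : List ℕ}, (∀ y ∈ C, y < x) → colInsertCol x C = (C ++ [x], none)
  | [], _ => rfl
  | y :: C, h => by
    have hy : ¬x ≤ y := not_le.mpr (h y List.mem_cons_self)
    simp [colInsertCol, hy, colInsertCol_of_forall_lt fun z hz => h z (List.mem_cons_of_mem _ hz)]

theorem colInsertCol_append_cons {x z : ℕ} (T : List ℕ) :
    ∀ {Q : List ℕ}, (∀ y ∈ Q, y < x) → x ≤ z →
      colInsertCol x (Q ++ z :: T) = (Q ++ x :: T, some z)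
  | [], _, hxz => by simp [colInsertCol, hxz]
  | y :: Q, h, hxz => by
    have hy : ¬x ≤ y := not_le.mpr (h y List.mem_cons_self)
    simp [colInsertCol, hy,
      colInsertCol_append_cons T (fun w hw => h w (List.mem_cons_of_mem _ hw)) hxz]

theorem colInsertCol_append_of_exists_le {x : ℕ} :
    ∀ {C₁ : List ℕ}, (∃ y ∈ C₁, x ≤ y) → ∃ C₁' z, (∀ w ∈ C₁', w ∈ C₁ ∨ w = x) ∧
      ∀ C₂, colInsertCol x (C₁ ++ C₂) = (C₁' ++ C₂, some z)
  | [], h => by simp at h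
  | y :: C, h => by
    by_cases hxy : x ≤ y
    · exact ⟨x :: C, y, by simp +contextual, fun C₂ => by simp [colInsertCol, hxy]⟩
    · obtain ⟨C', z, hmem, happ⟩ :=
        colInsertCol_append_of_exists_le (C₁ := C) (by simpa [hxy] using h)
      refine ⟨y :: C', z, ?_, fun C₂ => by simp [colInsertCol, hxy, happ]⟩
      simp only [List.mem_cons]
      rintro w (rfl | hw)
      · exact Or.inl (Or.inl rfl)
      · exact (hmem w hw).imp_left Or.inr

theorem colInsert_cons_of_none {x : ℕ} {C C' : List ℕ} {rest : List (List ℕ)}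
    (h : colInsertCol x C = (C', none)) : colInsert x (C :: rest) = C' :: rest := by
  simp only [colInsert, h]

theorem colInsert_cons_of_some {x z : ℕ} {C C' : List ℕ} {rest : List (List ℕ)}
    (h : colInsertCol x C = (C', some z)) : colInsert x (C :: rest) = C' :: colInsert z rest := by
  simp only [colInsert, h]

theorem insertWord_cons (x : ℕ) (w : List ℕ) (s : List (List ℕ)) :
    insertWord (x :: w) s = insertWord w (colInsert x s) := rfl

theorem insertWord_append (u v : List ℕ) (s : List (List ℕ)) :
    insertWord (u ++ v) s = insertWord v (insertWord u s) :=
  List.foldl_append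

theorem insertWord_singleton_of_pairwise :
    ∀ {w C : List ℕ}, (C ++ w).Pairwise (· < ·) → insertWord w [C] = [C ++ w]
  | [], C, _ => by simp [insertWord]
  | z :: w, C, h => by
    have hCz : ∀ y ∈ C, y < z := fun y hy =>
      (List.pairwise_append.mp h).2.2 y hy z List.mem_cons_self
    rw [insertWord_cons, colInsert_cons_of_none (colInsertCol_of_forall_lt hCz),
      insertWord_singleton_of_pairwise (by simpa using h)]
    simp

theorem insertWord_nil_eq_singleton_nil {w : List ℕ} (hw : w ≠ []) :
    insertWord w [] = insertWord w [[]] := by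
  obtain ⟨x, w, rfl⟩ := List.exists_cons_of_ne_nil hw
  rfl

/-- Each entry of `L₁` bumps an entry of the column no lower than its partner in `S`, so the
part `U` below `S` is never touched. -/
theorem insertWord_append_of_forall₂_le {L₁ S : List ℕ} (h : List.Forall₂ (· ≤ ·) L₁ S) :
    ∀ (Q : List ℕ) (rest : List (List ℕ)) (x : ℕ), (∀ y ∈ Q ++ S, y < x) →
      ∃ Q' rest', (∀ y ∈ Q', y < x) ∧
        ∀ U, insertWord L₁ ((Q ++ S ++ U) :: rest) = (Q' ++ U) :: rest' := by
  induction h with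
  | nil => exact fun Q rest x hQ => ⟨Q, rest, by simpa using hQ, fun U => by simp [insertWord]⟩
  | @cons l s L₁ S hls _ ih =>
    intro Q rest x hQS
    have hsx : s < x := hQS s (by simp)
    obtain ⟨C', z, hC', hbump⟩ :=
      colInsertCol_append_of_exists_le (C₁ := Q ++ [s]) ⟨s, by simp, hls⟩
    have hC'x : ∀ y ∈ C' ++ S, y < x := by
      intro y hy
      rcases List.mem_append.mp hy with hy | hy
      · rcases hC' y hy with hy | rfl
        · exact hQS y (by simp at hy ⊢; tauto)
        · exact hls.trans_lt hsx
      · exact hQS y (by simp [hy])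
    obtain ⟨Q', rest', hQ', heq⟩ := ih C' (colInsert z rest) x hC'x
    refine ⟨Q', rest', hQ', fun U => ?_⟩
    have hcol : Q ++ s :: S ++ U = Q ++ [s] ++ (S ++ U) := by simp
    rw [insertWord_cons, hcol, colInsert_cons_of_some (hbump _), ← heq, List.append_assoc]

/-- Both sides bump the entries of `T` into the next column in the same order and leave
`P ++ x :: L₂` as the first column. -/
theorem insertWord_cons_slide {L₂ T : List ℕ} (h : List.Forall₂ (· ≤ ·) L₂ T) :
    ∀ (P : List ℕ) (x : ℕ) (rest : List (List ℕ)), (∀ y ∈ P, y < x) →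
      (x :: L₂).Pairwise (· < ·) → (x :: T).Pairwise (· < ·) →
      insertWord (x :: L₂) ((P ++ T) :: rest) = insertWord L₂ ((P ++ x :: T) :: rest) := by
  induction h with
  | nil =>
    intro P x rest hP _ _
    simp [colInsert_cons_of_none (colInsertCol_of_forall_lt hP), insertWord]
  | @cons l z L₂ T hlz _ ih =>
    intro P x rest hP hxL hxT
    have hxl : x < l := List.rel_of_pairwise_cons hxL List.mem_cons_self
    have hxz : x < z := List.rel_of_pairwise_cons hxT List.mem_cons_self
    have hPx : ∀ y ∈ P ++ [x], y < l := by
      simpa [or_imp, forall_and, hxl] using fun y hy => (hP y hy).trans hxl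
    have hlT : (l :: T).Pairwise (· < ·) := by
      have hzT := hxT.of_cons
      exact List.pairwise_cons.mpr
        ⟨fun t ht => hlz.trans_lt (List.rel_of_pairwise_cons hzT ht), hzT.of_cons⟩
    have hl : colInsertCol l (P ++ [x] ++ z :: T) = (P ++ [x] ++ l :: T, some z) :=
      colInsertCol_append_cons T hPx hlz
    rw [insertWord_cons, colInsert_cons_of_some (colInsertCol_append_cons T hP hxz.le),
      (by simp : P ++ x :: T = P ++ [x] ++ T), ih (P ++ [x]) l _ hPx hxL.of_cons hlT,
      insertWord_cons l, (by simp : P ++ x :: z :: T = P ++ [x] ++ z :: T),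
      colInsert_cons_of_some hl]

/-- A jeu de taquin slide of `x` from the left column into the right one, cut into pieces:
before the slide `L₁` sits beside `S`, after it `L₂` sits beside `T`. -/
theorem insertWord_slide {Q S T L₁ L₂ Lr : List ℕ} {x : ℕ}
    (hR : (Q ++ S ++ T).Pairwise (· < ·)) (hQS : ∀ y ∈ Q ++ S, y < x)
    (hxT : (x :: T).Pairwise (· < ·)) (hxL₂ : (x :: L₂).Pairwise (· < ·))
    (hL₁S : List.Forall₂ (· ≤ ·) L₁ S) (hL₂T : List.Forall₂ (· ≤ ·) L₂ T) :
    insertWord (Q ++ S ++ T ++ (L₁ ++ x :: L₂ ++ Lr)) [] =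
      insertWord (Q ++ S ++ x :: T ++ (L₁ ++ L₂ ++ Lr)) [] := by
  have hR' : (Q ++ S ++ x :: T).Pairwise (· < ·) := by
    refine List.pairwise_append.mpr ⟨(List.pairwise_append.mp hR).1, hxT, ?_⟩
    rintro y hy z (_ | ⟨_, hz⟩)
    exacts [hQS y hy, (hQS y hy).trans (List.rel_of_pairwise_cons hxT hz)]
  obtain ⟨Q', rest', hQ', hL₁⟩ := insertWord_append_of_forall₂_le hL₁S Q [] x hQS
  rw [insertWord_nil_eq_singleton_nil (by simp), insertWord_nil_eq_singleton_nil (by simp),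
    insertWord_append (Q ++ S ++ T), insertWord_append (Q ++ S ++ x :: T),
    insertWord_singleton_of_pairwise (w := Q ++ S ++ T) (by simpa using hR),
    insertWord_singleton_of_pairwise (w := Q ++ S ++ x :: T) (by simpa using hR')]
  simp only [List.nil_append, insertWord_append]
  rw [hL₁, hL₁, insertWord_cons_slide hL₂T Q' x rest' hQ' hxL₂ hxT]

theorem TC.valid_iff {a b c : ℕ} {L R : List ℕ} :
    TC.Valid ⟨a, b, c, L, R⟩ ↔ L.length = a + c ∧ R.length = b + c ∧
      L.Pairwise (· < ·) ∧ R.Pairwise (· < ·) ∧ (∀ x ∈ L, 0 < x) ∧ (∀ x ∈ R, 0 < x) ∧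
      ∀ i < c, L.getD i 0 ≤ R.getD (b + i) 0 := by
  rw [← List.isChain_iff_pairwise, ← List.isChain_iff_pairwise]
  simp only [TC.Valid, SlideOK, Nat.sub_zero, Nat.add_zero]
  rfl

theorem TC.Valid.forall₂_take_drop {a b c : ℕ} {L R : List ℕ} (hU : TC.Valid ⟨a, b, c, L, R⟩) :
    List.Forall₂ (· ≤ ·) (L.take c) (R.drop b) := by
  obtain ⟨hLlen, hRlen, -, -, -, -, hrows⟩ := TC.valid_iff.mp hU
  refine List.forall₂_of_getD (d₁ := 0) (d₂ := 0) (by simp; omega) fun i hi => ?_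
  simp only [List.length_take] at hi
  simpa [List.getD_eq_getElem?_getD, List.getElem?_take, show i < c by omega]
    using hrows i (by omega)

/-- The jeu de taquin slide into the cell below the right column, when the entry it moves
across is the `j`-th one of the left column. -/
def TC.slideRight (T : TwoCol) (j : ℕ) : TwoCol :=
  ⟨T.a - 1, T.b + 1, T.c, T.L.eraseIdx j, T.R.insertIdx (T.b + j) (T.L.getD j 0)⟩

/-- The jeu de taquin slide into the cell above the left column, when the entry it moves
across becomes the `i`-th one of the left column. -/
def TC.slideLeft (T : TwoCol) (i : ℕ) : TwoCol :=
  ⟨T.a + 1, T.b - 1, T.c, T.L.insertIdx i (T.R.getD (T.b - 1 + i) 0), T.R.eraseIdx (T.b - 1 + i)⟩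

theorem TC.slideRight_slideLeft {T : TwoCol} {i : ℕ} (hb : 0 < T.b) (hiL : i ≤ T.L.length)
    (hiR : T.b - 1 + i < T.R.length) : TC.slideRight (TC.slideLeft T i) i = T := by
  obtain ⟨a, b, c, L, R⟩ := T
  simp only [TC.slideRight, TC.slideLeft] at *
  rw [List.eraseIdx_insertIdx_self, List.getD_insertIdx_self hiL, List.getD_eq_getElem _ _ hiR,
    List.insertIdx_eraseIdx_getElem hiR, Nat.add_sub_cancel, Nat.sub_add_cancel hb]

theorem TC.knuthEq_word_slideRight {T : TwoCol} {j : ℕ} (ha : 0 < T.a) (hj : j ≤ T.c)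
    (hU : TC.Valid T) (hU' : TC.Valid (TC.slideRight T j)) :
    KnuthEq (TC.word (TC.slideRight T j)) (TC.word T) := by
  obtain ⟨a, b, c, L, R⟩ := T
  dsimp only [TC.slideRight] at ha hj hU' ⊢
  obtain ⟨hLlen, hRlen, hL, hR, -⟩ := TC.valid_iff.mp hU
  obtain ⟨-, -, -, hR', -⟩ := TC.valid_iff.mp hU'
  set x := L.getD j 0 with hx
  set S := (R.drop b).take j
  set T := (R.drop b).drop j
  set L₂ := (L.drop (j + 1)).take (c - j)
  set Lr := (L.drop (j + 1)).drop (c - j)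
  have hLsplit : L = L.take j ++ x :: L₂ ++ Lr := by
    rw [List.append_assoc, List.cons_append, List.take_append_drop, hx,
      List.getD_eq_getElem _ _ (by omega), ← List.drop_eq_getElem_cons, List.take_append_drop]
  have hL'split : L.eraseIdx j = L.take j ++ L₂ ++ Lr := by
    rw [List.append_assoc, List.take_append_drop, List.eraseIdx_eq_take_drop_succ]
  have hRsplit : R = R.take b ++ S ++ T := by
    rw [List.append_assoc, List.take_append_drop, List.take_append_drop]
  have hR'split : R.insertIdx (b + j) x = R.take b ++ S ++ x :: T := by
    rw [List.insertIdx_eq_take_append_cons_drop x (by omega), List.take_add, ← List.drop_drop]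
  have hL₁S : List.Forall₂ (· ≤ ·) (L.take j) S := by
    simpa [List.take_take, hj] using List.forall₂_take j hU.forall₂_take_drop
  have hL₂T : List.Forall₂ (· ≤ ·) L₂ T := by
    have h := List.forall₂_drop j hU'.forall₂_take_drop
    rw [List.drop_drop, show b + 1 + j = b + j + 1 by omega,
      List.drop_succ_insertIdx x (by omega), hL'split] at h
    simpa [List.take_append, List.drop_append, L₂, T, hj, show j ≤ L.length by omega,
      min_eq_left (show c - j ≤ L.length - (j + 1) by omega)] using h
  rw [hR'split] at hR'
  have key := insertWord_slide (Lr := Lr) (hRsplit ▸ hR)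
    (fun y hy => (List.pairwise_append.mp hR').2.2 y hy x List.mem_cons_self)
    (List.pairwise_append.mp hR').2.1
    (hL.sublist (hLsplit ▸ (List.sublist_append_right _ _).trans (List.sublist_append_left _ _)))
    hL₁S hL₂T
  rw [← hLsplit, ← hL'split, ← hRsplit, ← hR'split] at key
  exact key.symm

theorem TC.Valid.slideRight {a b c j : ℕ} {L R : List ℕ} (hU : TC.Valid ⟨a, b, c, L, R⟩)
    (ha : 0 < a) (hj : j ≤ c) (hjR : 0 < b + j → R.getD (b + j - 1) 0 < L.getD j 0)
    (hbelow : ∀ k, j < k → k ≤ c → L.getD k 0 ≤ R.getD (b + k - 1) 0) :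
    TC.Valid (TC.slideRight ⟨a, b, c, L, R⟩ j) := by
  obtain ⟨hLlen, hRlen, hL, hR, hLpos, hRpos, hrows⟩ := TC.valid_iff.mp hU
  dsimp only [TC.slideRight]
  have hjL : j < L.length := by omega
  refine TC.valid_iff.mpr ⟨?_, ?_, hL.sublist (L.eraseIdx_sublist j), ?_,
    fun y hy => hLpos y ((L.eraseIdx_sublist j).subset hy), ?_, ?_⟩
  · rw [List.length_eraseIdx_of_lt hjL]; omega
  · rw [List.length_insertIdx_of_le_length (by omega)]; omega
  · refine hR.insertIdx (by omega) hjR fun hjc => ?_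
    calc L.getD j 0 < L.getD (j + 1) 0 := hL.getD_lt_getD j.lt_succ_self (by omega) 0
      _ ≤ R.getD (b + j) 0 := hbelow (j + 1) (by omega) (by omega)
  · intro y hy
    rcases (List.mem_insertIdx (by omega)).mp hy with rfl | hy
    · exact hLpos _ (List.getD_eq_getElem L 0 hjL ▸ List.getElem_mem hjL)
    · exact hRpos y hy
  · intro i hi
    rcases lt_trichotomy (i + 1) j with h | h | h
    · rw [List.getD_eraseIdx_of_lt (by omega), List.getD_insertIdx_of_lt (by omega)]
      exact (hrows i hi).trans (hR.getD_le_getD (by omega) (by omega) 0)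
    · subst h
      rw [List.getD_eraseIdx_of_lt (by omega), show b + 1 + i = b + (i + 1) by omega,
        List.getD_insertIdx_self (by omega)]
      exact (hL.getD_lt_getD (by omega) hjL 0).le
    · rw [List.getD_eraseIdx_of_ge (by omega), List.getD_insertIdx_of_gt (by omega)]
      simpa using hbelow (i + 1) (by omega) (by omega)

theorem TC.Valid.slideLeft {a b c i : ℕ} {L R : List ℕ} (hU : TC.Valid ⟨a, b, c, L, R⟩)
    (hb : 0 < b) (hi : i ≤ c) (hiL : i < L.length → R.getD (b - 1 + i) 0 < L.getD i 0)
    (habove : ∀ k < i, L.getD k 0 ≤ R.getD (b - 1 + k) 0) :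
    TC.Valid (TC.slideLeft ⟨a, b, c, L, R⟩ i) := by
  obtain ⟨hLlen, hRlen, hL, hR, hLpos, hRpos, hrows⟩ := TC.valid_iff.mp hU
  dsimp only [TC.slideLeft]
  have hqR : b - 1 + i < R.length := by omega
  refine TC.valid_iff.mpr ⟨?_, ?_, ?_, hR.sublist (R.eraseIdx_sublist _), ?_,
    fun y hy => hRpos y ((R.eraseIdx_sublist _).subset hy), ?_⟩
  · rw [List.length_insertIdx_of_le_length (by omega)]; omega
  · rw [List.length_eraseIdx_of_lt hqR]; omega
  · refine hL.insertIdx (by omega) (fun hi0 => ?_) hiL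
    calc L.getD (i - 1) 0 ≤ R.getD (b - 1 + (i - 1)) 0 := habove (i - 1) (by omega)
      _ < R.getD (b - 1 + i) 0 := hR.getD_lt_getD (by omega) hqR 0
  · intro y hy
    rcases (List.mem_insertIdx (by omega)).mp hy with rfl | hy
    · exact hRpos _ (List.getD_eq_getElem R 0 hqR ▸ List.getElem_mem hqR)
    · exact hLpos y hy
  · intro k hk
    rcases lt_trichotomy k i with h | rfl | h
    · rw [List.getD_insertIdx_of_lt h, List.getD_eraseIdx_of_lt (by omega)]
      exact habove k h
    · rw [List.getD_insertIdx_self (by omega), List.getD_eraseIdx_of_ge le_rfl]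
      exact (hR.getD_lt_getD (by omega) (by omega) 0).le
    · rw [List.getD_insertIdx_of_gt h, List.getD_eraseIdx_of_ge (by omega)]
      calc L.getD (k - 1) 0 ≤ R.getD (b + (k - 1)) 0 := hrows (k - 1) (by omega)
        _ ≤ R.getD (b - 1 + k + 1) 0 := hR.getD_le_getD (by omega) (by omega) 0

theorem TC.knuthEq_word_slideLeft {T : TwoCol} {i : ℕ} (hb : 0 < T.b) (hi : i ≤ T.c)
    (hU : TC.Valid T) (hU' : TC.Valid (TC.slideLeft T i)) :
    KnuthEq (TC.word (TC.slideLeft T i)) (TC.word T) := by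
  obtain ⟨a, b, c, L, R⟩ := T
  dsimp only at hb hi
  obtain ⟨hLlen, hRlen, -⟩ := TC.valid_iff.mp hU
  have hback := TC.slideRight_slideLeft (T := ⟨a, b, c, L, R⟩) (i := i) hb (by dsimp; omega)
    (by dsimp; omega)
  have h := TC.knuthEq_word_slideRight (T := TC.slideLeft ⟨a, b, c, L, R⟩ i) a.succ_pos hi hU'
    (by rwa [hback])
  rw [hback] at h
  exact h.symm

theorem TC.exists_getD_lt_of_resid_eq_zero {a b c : ℕ} {L R : List ℕ}
    (hr : resid ⟨a, b, c, L, R⟩ = 0) (ha : 0 < a) (hb : 0 < b) :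
    ∃ i ≤ c, R.getD (b - 1 + i) 0 < L.getD i 0 := by
  have h : ¬SlideOK ⟨a, b, c, L, R⟩ 1 :=
    Nat.findGreatest_eq_zero_iff.mp hr one_pos (by simp; omega)
  simp only [SlideOK, not_forall, not_le] at h
  obtain ⟨i, hi, hlt⟩ := h
  exact ⟨i, by omega, hlt⟩

theorem TC.exists_index_slideRight {a b c : ℕ} {L R : List ℕ} (hr : resid ⟨a, b, c, L, R⟩ = 0)
    (ha : 0 < a) :
    ∃ j ≤ c, (0 < b + j → R.getD (b + j - 1) 0 < L.getD j 0) ∧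
      ∀ k, j < k → k ≤ c → L.getD k 0 ≤ R.getD (b + k - 1) 0 := by
  let P k := 0 < b + k → R.getD (b + k - 1) 0 < L.getD k 0
  obtain ⟨k, hk, hPk⟩ : ∃ k ≤ c, P k := by
    rcases Nat.eq_zero_or_pos b with rfl | hb
    · exact ⟨0, Nat.zero_le c, by simp [P]⟩
    · obtain ⟨i, hi, hlt⟩ := TC.exists_getD_lt_of_resid_eq_zero hr ha hb
      exact ⟨i, hi, fun _ => by rwa [show b + i - 1 = b - 1 + i by omega]⟩
  refine ⟨Nat.findGreatest P c, Nat.findGreatest_le c, Nat.findGreatest_spec hk hPk,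
    fun k hk hkc => ?_⟩
  have h := Nat.findGreatest_is_greatest hk hkc
  simp only [P, Classical.not_imp, not_lt] at h
  exact h.2

theorem TC.exists_index_slideLeft {a b c : ℕ} {L R : List ℕ} (hr : resid ⟨a, b, c, L, R⟩ = 0)
    (hb : 0 < b) (hL : L.length = a + c) :
    ∃ i ≤ c, (i < L.length → R.getD (b - 1 + i) 0 < L.getD i 0) ∧
      ∀ k < i, L.getD k 0 ≤ R.getD (b - 1 + k) 0 := by
  let P k := k < L.length → R.getD (b - 1 + k) 0 < L.getD k 0
  obtain ⟨k, hk, hPk⟩ : ∃ k ≤ c, P k := by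
    rcases Nat.eq_zero_or_pos a with rfl | ha
    · exact ⟨c, le_rfl, fun h => by omega⟩
    · obtain ⟨i, hi, hlt⟩ := TC.exists_getD_lt_of_resid_eq_zero hr ha hb
      exact ⟨i, hi, fun _ => hlt⟩
  have hex : ∃ k, P k := ⟨k, hPk⟩
  refine ⟨Nat.find hex, (Nat.find_min' hex hPk).trans hk, Nat.find_spec hex,
    fun k hk => ?_⟩
  have h := Nat.find_min hex hk
  simp only [P, Classical.not_imp, not_lt] at h
  exact h.2

/-- Let `U` be a semistandard tableau of shape
`λ(a,b,c) = (2^{b+c},1^a)/(1^b)` with `𝔯_U = 0` (the right column cannot be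
slid down preserving semistandardness).  If `a > 0`, applying jeu de taquin to
the position below the bottom of `U^R` yields a semistandard tableau of shape
`λ(a-1,b+1,c)`; if `b > 0`, applying jeu de taquin to the position above the
top of `U^L` yields a semistandard tableau of shape `λ(a+1,b-1,c)`.  (Jeu de
taquin slides preserve the Knuth class of the column reading word, so the
resulting tableau is the semistandard filling of the stated shape that is
Knuth equivalent to `U`.) -/
theorem jdt_two_column (a b c : ℕ) (L R : List ℕ)
    (hU : TC.Valid ⟨a, b, c, L, R⟩) (hr : resid ⟨a, b, c, L, R⟩ = 0) :
    (0 < a → ∃ L' R' : List ℕ, TC.Valid ⟨a - 1, b + 1, c, L', R'⟩ ∧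
        KnuthEq (TC.word ⟨a - 1, b + 1, c, L', R'⟩) (TC.word ⟨a, b, c, L, R⟩)) ∧
    (0 < b → ∃ L' R' : List ℕ, TC.Valid ⟨a + 1, b - 1, c, L', R'⟩ ∧
        KnuthEq (TC.word ⟨a + 1, b - 1, c, L', R'⟩) (TC.word ⟨a, b, c, L, R⟩)) := by
  constructor
  · intro ha
    obtain ⟨j, hj, hjR, hbelow⟩ := TC.exists_index_slideRight hr ha
    have hU' := hU.slideRight ha hj hjR hbelow
    exact ⟨_, _, hU', TC.knuthEq_word_slideRight ha hj hU hU'⟩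
  · intro hb
    obtain ⟨i, hi, hiL, habove⟩ := TC.exists_index_slideLeft hr hb hU.1
    have hU' := hU.slideLeft hb hi hiL habove
    exact ⟨_, _, hU', TC.knuthEq_word_slideLeft hb hi hU hU'⟩

end LRPaper
end

section
/- Let μ be a partition with at most n parts. For T in the set D_n(μ) of distinguished tableaux, the set 𝒫_T of partitions ρ with at most n parts for which T is ρ-distinguished satisfies 𝒫_T = ρ_T + 𝒫^{(2,2)}_n, where ρ_T = Σ_{i even, 1≤i≤n-1} (ε_i(T) mod 2)·ϖ_i, and 𝒫^{(2,2)}_n is the set of partitions with at most n parts that have all parts even and all column lengths even. In particular ρ_T is the unique minimal such partition. -/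
namespace LRPaper

/-- `ε` of a word for the crystal operator acting on the letters `i+1, i+2`
(the signature rule): the number of unmatched letters `i+2`. -/
def epsW (i : ℕ) (w : List ℕ) : ℕ :=
  ((List.range (w.length + 1)).map fun k =>
    (w.take k).count (i + 2) - (w.take k).count (i + 1)).foldr max 0

/-- `φ` of a word for the crystal operator acting on the letters `i+1, i+2`:
the number of unmatched letters `i+1`. -/
def phiW (i : ℕ) (w : List ℕ) : ℕ :=
  ((List.range (w.length + 1)).map fun k =>
    (w.drop k).count (i + 1) - (w.drop k).count (i + 2)).foldr max 0

/-- `ε_{i+1}(T)` for a tableau `T` of shape `μ^π`, computed on its column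
reading word. -/
def epsT (mu : List ℕ) (T : List (List ℕ)) (i : ℕ) : ℕ :=
  epsW i (colWord (piOuter mu) (piInner mu) T)

/-- `φ_{i+1}(T)` for a tableau `T` of shape `μ^π`. -/
def phiT (mu : List ℕ) (T : List (List ℕ)) (i : ℕ) : ℕ :=
  phiW i (colWord (piOuter mu) (piInner mu) T)

/-- `T ∈ SST_n(μ^π)`: a semistandard tableau of shape `μ^π` with entries in
`{1, …, n}`. -/
def InSSTn (n : ℕ) (mu : List ℕ) (T : List (List ℕ)) : Prop :=
  IsSkewSSYT (piOuter mu) (piInner mu) T ∧ ∀ x ∈ T.flatten, x ≤ n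

/-- The conjugate of a partition given as a function. -/
noncomputable def conjF (p : ℕ → ℕ) (j : ℕ) : ℕ := Nat.card {i : ℕ // j < p i}

/-- A partition with at most `n` parts, as a function. -/
def IsPartF (n : ℕ) (p : ℕ → ℕ) : Prop := Antitone p ∧ ∀ i, n ≤ i → p i = 0

/-- `T` is `ρ`-distinguished via the pair `(λ, δ)`:
`φ(T) = λ - ρ` and `ε(T) = δ - ρ`, where `λ` has at most `n` parts and all
column lengths even, and `δ` has at most `n` parts, all even.  (The `j`-th
coordinate of `Σ_i φ_i(T) ϖ_i` is `Σ_{i ≥ j} φ_i(T)`.) -/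
def IsDistinguishedWith (n : ℕ) (mu : List ℕ) (T : List (List ℕ))
    (ρ lam delta : ℕ → ℕ) : Prop :=
  IsPartF n lam ∧ (∀ j, 2 ∣ conjF lam j) ∧
  IsPartF n delta ∧ (∀ i, 2 ∣ delta i) ∧
  (∀ j < n, lam j = ρ j + ∑ i ∈ Finset.Ico j (n - 1), phiT mu T i) ∧
  (∀ j < n, delta j = ρ j + ∑ i ∈ Finset.Ico j (n - 1), epsT mu T i)

/-- `T` is `ρ`-distinguished. -/
def IsDistinguished (n : ℕ) (mu : List ℕ) (T : List (List ℕ)) (ρ : ℕ → ℕ) :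
    Prop :=
  IsPartF n ρ ∧ ∃ lam delta, IsDistinguishedWith n mu T ρ lam delta

/-- The weight `ρ_T = Σ_{i even, 1 ≤ i ≤ n-1} (ε_i(T) mod 2)·ϖ_i`, as a
function of the coordinate `j` (0-based). -/
def rhoT (n : ℕ) (mu : List ℕ) (T : List (List ℕ)) (j : ℕ) : ℕ :=
  ∑ i ∈ (Finset.Ico j (n - 1)).filter (fun i => (i + 1) % 2 = 0),
    epsT mu T i % 2

/-- `κ ∈ 𝒫^{(2,2)}_n`: a partition with at most `n` parts, all parts even and
all column lengths even. -/
def InP22 (n : ℕ) (κ : ℕ → ℕ) : Prop :=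
  IsPartF n κ ∧ (∀ i, 2 ∣ κ i) ∧ (∀ j, 2 ∣ conjF κ j)

/-!
Write `Φ` and `E` for the partial sums of `φ(T)` and `ε(T)`, so that `T` is `ρ`-distinguished iff
`ρ + Φ` has even column lengths and `ρ + E` has even parts. For antitone functions, even column
lengths means `f (2k) = f (2k+1)` for all `k`, and this property of a sum of two antitone functions
splits into the same property of each summand. One distinguished `ρ₀` therefore forces
`Φ (2k) = Φ (2k+1)`, i.e. `φ_{2k+1}(T) = 0`, and also `ε_{2k+1}(T)` even. Then `ρ_T ≡ E (mod 2)`,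
and the conditions on `ρ` become: `ρ` is paired and `ρ ≡ ρ_T (mod 2)`. Since `ρ_T` is itself
paired and drops by at most one at each step, exactly where the parity of `ρ` has to change,
`ρ - ρ_T` is again a partition, paired and with even parts.
-/

def PairedParts (f : ℕ → ℕ) : Prop := ∀ k, f (2 * k) = f (2 * k + 1)

lemma pairedParts_add_iff {f g : ℕ → ℕ} (hf : Antitone f) (hg : Antitone g) :
    PairedParts (f + g) ↔ PairedParts f ∧ PairedParts g := by
  refine ⟨fun h => ?_, fun ⟨hf', hg'⟩ k => by simp only [Pi.add_apply, hf' k, hg' k]⟩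
  have key : ∀ k, f (2 * k) = f (2 * k + 1) ∧ g (2 * k) = g (2 * k + 1) := fun k => by
    have := h k
    have := hf (show 2 * k ≤ 2 * k + 1 by omega)
    have := hg (show 2 * k ≤ 2 * k + 1 by omega)
    simp only [Pi.add_apply] at *
    omega
  exact ⟨fun k => (key k).1, fun k => (key k).2⟩

lemma IsPartF.add {n : ℕ} {f g : ℕ → ℕ} (hf : IsPartF n f) (hg : IsPartF n g) :
    IsPartF n (f + g) :=
  ⟨hf.1.add hg.1, fun i hi => by simp [hf.2 i hi, hg.2 i hi]⟩

lemma conjF_eq_of_antitone {f : ℕ → ℕ} (hf : Antitone f) {j c : ℕ}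
    (hlt : ∀ i < c, j < f i) (hle : f c ≤ j) : conjF f j = c := by
  have hset : {i : ℕ | j < f i} = ↑(Finset.Iio c) := by
    ext i
    simp only [Set.mem_ofPred_eq, Finset.coe_Iio, Set.mem_Iio]
    refine ⟨fun hi => ?_, hlt i⟩
    by_contra! hc
    exact absurd (hf hc) (by omega)
  calc conjF f j = {i : ℕ | j < f i}.ncard := Nat.card_coe_set_eq _
    _ = c := by rw [hset, Set.ncard_coe_finset, Nat.card_Iio]

lemma even_conjF_iff {n : ℕ} {f : ℕ → ℕ} (hf : IsPartF n f) :
    (∀ j, 2 ∣ conjF f j) ↔ PairedParts f := by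
  constructor
  · intro h k
    by_contra hne
    have hlt : f (2 * k + 1) < f (2 * k) := lt_of_le_of_ne (hf.1 (by omega)) (Ne.symm hne)
    have hc : conjF f (f (2 * k + 1)) = 2 * k + 1 :=
      conjF_eq_of_antitone hf.1 (fun i hi => hlt.trans_le (hf.1 (by omega))) le_rfl
    have := h (f (2 * k + 1))
    omega
  · intro h j
    have hex : ∃ i, f i ≤ j := ⟨n, by rw [hf.2 n le_rfl]; omega⟩
    have hc : conjF f j = Nat.find hex :=
      conjF_eq_of_antitone hf.1 (fun i hi => not_le.mp (Nat.find_min hex hi)) (Nat.find_spec hex)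
    rw [hc]
    obtain ⟨k, hk | hk⟩ := Nat.even_or_odd' (Nat.find hex)
    · exact ⟨k, hk⟩
    · -- the column `j` would end between the paired rows `2k` and `2k+1`
      have h1 := Nat.find_spec hex
      have h2 := Nat.find_min hex (show 2 * k < Nat.find hex by omega)
      rw [hk, ← h k] at h1
      exact absurd h1 h2

lemma inP22_iff {n : ℕ} {κ : ℕ → ℕ} :
    InP22 n κ ↔ IsPartF n κ ∧ (∀ i, 2 ∣ κ i) ∧ PairedParts κ :=
  ⟨fun ⟨hκ, he, hc⟩ => ⟨hκ, he, (even_conjF_iff hκ).mp hc⟩,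
    fun ⟨hκ, he, hp⟩ => ⟨hκ, he, (even_conjF_iff hκ).mpr hp⟩⟩

/-- The coordinates of `Σ_{i < n-1} f_i ϖ_{i+1}`. -/
def tailSum (n : ℕ) (f : ℕ → ℕ) (j : ℕ) : ℕ := ∑ i ∈ Finset.Ico j (n - 1), f i

section tailSum

variable {n : ℕ} {f : ℕ → ℕ} {j : ℕ}

lemma tailSum_of_le (h : n - 1 ≤ j) : tailSum n f j = 0 := by
  simp [tailSum, Finset.Ico_eq_empty_of_le h]

lemma tailSum_of_lt (h : j < n - 1) : tailSum n f j = f j + tailSum n f (j + 1) :=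
  Finset.sum_eq_sum_Ico_succ_bot h f

lemma isPartF_tailSum : IsPartF n (tailSum n f) :=
  ⟨fun _ _ hij => Finset.sum_le_sum_of_subset (Finset.Ico_subset_Ico hij le_rfl),
    fun _ hi => tailSum_of_le (by omega)⟩

lemma tailSum_modEq {g : ℕ → ℕ} (h : ∀ i < n - 1, f i ≡ g i [MOD 2]) :
    tailSum n f j ≡ tailSum n g j [MOD 2] :=
  Nat.ModEq.sum fun i hi => h i (Finset.mem_Ico.mp hi).2

lemma eq_add_tailSum {lam ρ : ℕ → ℕ} (hlam : IsPartF n lam) (hρ : IsPartF n ρ)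
    (h : ∀ j < n, lam j = ρ j + tailSum n f j) : lam = ρ + tailSum n f := by
  funext j
  by_cases hj : j < n
  · exact h j hj
  · simp [hlam.2 j (by omega), hρ.2 j (by omega), tailSum_of_le (show n - 1 ≤ j by omega)]

end tailSum

section Tableau

variable {n : ℕ} {mu : List ℕ} {T : List (List ℕ)} {ρ : ℕ → ℕ}

lemma isDistinguished_iff :
    IsDistinguished n mu T ρ ↔ IsPartF n ρ ∧ PairedParts ρ ∧
      PairedParts (tailSum n (phiT mu T)) ∧ ∀ j, 2 ∣ ρ j + tailSum n (epsT mu T) j := by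
  constructor
  · rintro ⟨hρ, lam, delta, hlam, hlamC, hdelta, hdeltaE, hlamEq, hdeltaEq⟩
    obtain rfl := eq_add_tailSum hlam hρ hlamEq
    obtain rfl := eq_add_tailSum hdelta hρ hdeltaEq
    obtain ⟨hρP, hΦ⟩ :=
      (pairedParts_add_iff hρ.1 isPartF_tailSum.1).mp ((even_conjF_iff hlam).mp hlamC)
    exact ⟨hρ, hρP, hΦ, hdeltaE⟩
  · rintro ⟨hρ, hρP, hΦ, hE⟩
    have hlam : IsPartF n (ρ + tailSum n (phiT mu T)) := hρ.add isPartF_tailSum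
    refine ⟨hρ, _, _, hlam,
      (even_conjF_iff hlam).mpr ((pairedParts_add_iff hρ.1 isPartF_tailSum.1).mpr ⟨hρP, hΦ⟩),
      hρ.add isPartF_tailSum, hE, fun _ _ => rfl, fun _ _ => rfl⟩

lemma rhoT_eq_tailSum :
    rhoT n mu T = tailSum n fun i => if (i + 1) % 2 = 0 then epsT mu T i % 2 else 0 := by
  funext j
  exact Finset.sum_filter _ _

lemma rhoT_of_le {j : ℕ} (h : n - 1 ≤ j) : rhoT n mu T j = 0 := by
  rw [rhoT_eq_tailSum, tailSum_of_le h]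

lemma rhoT_of_lt {j : ℕ} (h : j < n - 1) :
    rhoT n mu T j = (if (j + 1) % 2 = 0 then epsT mu T j % 2 else 0) + rhoT n mu T (j + 1) := by
  rw [rhoT_eq_tailSum, tailSum_of_lt h]

lemma isPartF_rhoT : IsPartF n (rhoT n mu T) := rhoT_eq_tailSum ▸ isPartF_tailSum

lemma pairedParts_rhoT : PairedParts (rhoT n mu T) := by
  intro k
  by_cases h : 2 * k < n - 1
  · rw [rhoT_of_lt h, if_neg (by omega), zero_add]
  · rw [rhoT_of_le (by omega), rhoT_of_le (by omega)]

lemma rhoT_le_succ_add_one (j : ℕ) : rhoT n mu T j ≤ rhoT n mu T (j + 1) + 1 := by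
  by_cases h : j < n - 1
  · rw [rhoT_of_lt h]
    split_ifs <;> omega
  · rw [rhoT_of_le (by omega)]
    omega

lemma rhoT_modEq_tailSum_epsT (h : ∀ k, 2 * k < n - 1 → 2 ∣ epsT mu T (2 * k)) (j : ℕ) :
    rhoT n mu T j ≡ tailSum n (epsT mu T) j [MOD 2] := by
  rw [rhoT_eq_tailSum]
  refine tailSum_modEq fun i hi => ?_
  split_ifs with hodd
  · exact Nat.mod_modEq _ _
  · obtain ⟨k, rfl⟩ : ∃ k, i = 2 * k := ⟨i / 2, by omega⟩
    exact (Nat.modEq_zero_iff_dvd.mpr (h k hi)).symm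

lemma two_dvd_epsT_of_isDistinguished (h : IsDistinguished n mu T ρ) (k : ℕ)
    (hk : 2 * k < n - 1) : 2 ∣ epsT mu T (2 * k) := by
  obtain ⟨-, hρP, -, hE⟩ := isDistinguished_iff.mp h
  have h₁ := hE (2 * k)
  have h₂ := hE (2 * k + 1)
  rw [tailSum_of_lt hk, hρP k] at h₁
  omega

lemma isDistinguished_iff_of_isDistinguished {ρ₀ : ℕ → ℕ} (h₀ : IsDistinguished n mu T ρ₀) :
    IsDistinguished n mu T ρ ↔
      IsPartF n ρ ∧ PairedParts ρ ∧ ∀ j, ρ j ≡ rhoT n mu T j [MOD 2] := by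
  have hΦ := (isDistinguished_iff.mp h₀).2.2.1
  have hr := rhoT_modEq_tailSum_epsT (two_dvd_epsT_of_isDistinguished h₀)
  have hpar : ∀ j, 2 ∣ ρ j + tailSum n (epsT mu T) j ↔ ρ j ≡ rhoT n mu T j [MOD 2] := by
    intro j
    have := hr j
    simp only [Nat.ModEq] at *
    omega
  simp only [isDistinguished_iff, hpar, hΦ, true_and]

end Tableau

section AddP22

variable {n : ℕ} {r ρ : ℕ → ℕ}

/-- The translate `r + 𝒫^{(2,2)}_n`. -/
def addP22 (n : ℕ) (r : ℕ → ℕ) : Set (ℕ → ℕ) := {ρ | ∃ κ, InP22 n κ ∧ ρ = fun j => r j + κ j}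

lemma antitone_sub_of_modEq (hρ : Antitone ρ) (hr : Antitone r)
    (hstep : ∀ j, r j ≤ r (j + 1) + 1) (hmod : ∀ j, ρ j ≡ r j [MOD 2]) :
    Antitone fun j => (ρ j : ℤ) - r j := by
  refine antitone_nat_of_succ_le fun j => ?_
  have := hρ (show j ≤ j + 1 by omega)
  have := hr (show j ≤ j + 1 by omega)
  have := hstep j
  have := hmod j
  have := hmod (j + 1)
  simp only [Nat.ModEq] at *
  omega

lemma mem_addP22_iff (hr : IsPartF n r) (hrP : PairedParts r)
    (hstep : ∀ j, r j ≤ r (j + 1) + 1) :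
    ρ ∈ addP22 n r ↔ IsPartF n ρ ∧ PairedParts ρ ∧ ∀ j, ρ j ≡ r j [MOD 2] := by
  constructor
  · rintro ⟨κ, hκ, rfl⟩
    obtain ⟨hκ, hκE, hκP⟩ := inP22_iff.mp hκ
    refine ⟨hr.add hκ, (pairedParts_add_iff hr.1 hκ.1).mpr ⟨hrP, hκP⟩, fun j => ?_⟩
    simpa using Nat.ModEq.add_left (r j) (Nat.modEq_zero_iff_dvd.mpr (hκE j))
  · rintro ⟨hρ, hρP, hmod⟩
    have hanti := antitone_sub_of_modEq hρ.1 hr.1 hstep hmod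
    have hle : ∀ j, r j ≤ ρ j := fun j => by
      have := hanti (Nat.le_add_right j n)
      simp only [hρ.2 (j + n) (by omega), hr.2 (j + n) (by omega)] at this
      omega
    refine ⟨fun j => ρ j - r j, inP22_iff.mpr ⟨⟨fun i j hij => ?_, fun i hi => ?_⟩, fun j => ?_,
      fun k => ?_⟩, funext fun j => (Nat.add_sub_of_le (hle j)).symm⟩
    · have := hanti hij
      dsimp only at this ⊢
      have := hle i
      have := hle j
      omega
    · simp [hρ.2 i hi, hr.2 i hi]
    · exact (Nat.modEq_iff_dvd' (hle j)).mp (hmod j).symm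
    · simp only [hρP k, hrP k]

lemma self_mem_addP22 : r ∈ addP22 n r :=
  ⟨0, inP22_iff.mpr ⟨⟨antitone_const, fun _ _ => rfl⟩, fun _ => dvd_zero 2, fun _ => rfl⟩, rfl⟩

lemma le_of_mem_addP22 (h : ρ ∈ addP22 n r) (j : ℕ) : r j ≤ ρ j := by
  obtain ⟨κ, -, rfl⟩ := h
  exact Nat.le_add_right _ _

lemma eq_of_addP22_eq {σ : ℕ → ℕ} (h : addP22 n σ = addP22 n r) : σ = r := by
  have hσ : σ ∈ addP22 n r := h ▸ self_mem_addP22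
  have hr : r ∈ addP22 n σ := h ▸ self_mem_addP22
  exact funext fun j => le_antisymm (le_of_mem_addP22 hr j) (le_of_mem_addP22 hσ j)

end AddP22

theorem distinguished_set_eq_rhoT_add_P22_general
    (n : ℕ) (mu : List ℕ)
    (T : List (List ℕ))
    (hD : ∃ ρ, IsDistinguished n mu T ρ) :
    {ρ : ℕ → ℕ | IsDistinguished n mu T ρ} =
      {σ : ℕ → ℕ | ∃ κ, InP22 n κ ∧ σ = fun j => rhoT n mu T j + κ j} ∧
    (∀ σ : ℕ → ℕ,
      ({ρ : ℕ → ℕ | IsDistinguished n mu T ρ} =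
        {ρ' : ℕ → ℕ | ∃ κ, InP22 n κ ∧ ρ' = fun j => σ j + κ j}) →
      σ = rhoT n mu T) ∧
    (∀ ρ, IsDistinguished n mu T ρ → ∀ j, rhoT n mu T j ≤ ρ j) := by
  obtain ⟨ρ₀, h₀⟩ := hD
  have hset : {ρ | IsDistinguished n mu T ρ} = addP22 n (rhoT n mu T) :=
    Set.ext fun _ => (isDistinguished_iff_of_isDistinguished h₀).trans
      (mem_addP22_iff isPartF_rhoT pairedParts_rhoT rhoT_le_succ_add_one).symm
  refine ⟨hset, fun σ hσ => eq_of_addP22_eq (hσ.symm.trans hset), fun ρ hρ => ?_⟩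
  exact le_of_mem_addP22 (show ρ ∈ addP22 n (rhoT n mu T) from hset ▸ hρ)

/-- Let `μ` be a partition with at most `n` parts and let
`T ∈ D_n(μ)` be a distinguished tableau.  Then the set `𝒫_T` of partitions
`ρ` (with at most `n` parts) for which `T` is `ρ`-distinguished equals
`ρ_T + 𝒫^{(2,2)}_n`, where
`ρ_T = Σ_{i even, 1≤i≤n-1} (ε_i(T) mod 2)·ϖ_i`; in particular `ρ_T` is the
unique minimal such partition. -/
theorem distinguished_set_eq_rhoT_add_P22
    (n : ℕ) (mu : List ℕ) (hmu : IsPartition mu) (hlen : mu.length ≤ n)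
    (T : List (List ℕ)) (hT : InSSTn n mu T)
    (hD : ∃ ρ, IsDistinguished n mu T ρ) :
    {ρ : ℕ → ℕ | IsDistinguished n mu T ρ} =
      {σ : ℕ → ℕ | ∃ κ, InP22 n κ ∧ σ = fun j => rhoT n mu T j + κ j} ∧
    (∀ σ : ℕ → ℕ,
      ({ρ : ℕ → ℕ | IsDistinguished n mu T ρ} =
        {ρ' : ℕ → ℕ | ∃ κ, InP22 n κ ∧ ρ' = fun j => σ j + κ j}) →
      σ = rhoT n mu T) ∧
    (∀ ρ, IsDistinguished n mu T ρ → ∀ j, rhoT n mu T j ≤ ρ j) :=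
  distinguished_set_eq_rhoT_add_P22_general n mu T hD

end LRPaper
end
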